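/- Fix M > 0 and let φ(d, h) = −2d/(h + √(h² + 2M|d|)) (with φ(0,0) = 0) denote the global minimizer of P(α; d, h) = dα + (h/2)α² + (M/6)|α|³ over α ∈ ℝ. Let d, d′ ∈ ℝ have the same sign (d·d′ ≥ 0) and h, h′ ≥ 0, and set S = √(h² + 2M|d|), S′ = √((h′)² + 2M|d′|). If S + S′ > 0, then |φ(d, h) − φ(d′, h′)| ≤ |h − h′|/M + 2|d − d′|/(S + S′). -/
import Mathlib


/-- The global minimizer `φ(d, h) = −2d/(h + √(h² + 2M|d|))` of the cubic-regularized model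
`P(α; d, h) = dα + (h/2)α² + (M/6)|α|³` (understood as `0` when `d = 0` and `h = 0`,
since in Lean division by zero is zero). -/
noncomputable def cubicMin (M d h : ℝ) : ℝ :=
  -2 * d / (h + Real.sqrt (h ^ 2 + 2 * M * |d|))

lemma cubicMin_neg (M d h : ℝ) : cubicMin M (-d) h = -(cubicMin M d h) := by
  simp [cubicMin, abs_neg, neg_div, ← neg_mul]
  ring_nf

lemma cubicMin_eq (M : ℝ) (hM : 0 < M) (d h : ℝ) (hd : 0 ≤ d) (hh : 0 ≤ h) :
    cubicMin M d h = (h - Real.sqrt (h ^ 2 + 2 * M * |d|)) / M := by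
  set S := Real.sqrt (h ^ 2 + 2 * M * |d|) with hSdef
  have hnn : 0 ≤ h ^ 2 + 2 * M * |d| := by positivity
  have hS2 : S ^ 2 = h ^ 2 + 2 * M * |d| := Real.sq_sqrt hnn
  have hSnn : 0 ≤ S := Real.sqrt_nonneg _
  rcases eq_or_lt_of_le (by positivity : (0:ℝ) ≤ h + S) with h0 | h0
  · have hh0 : h = 0 := by linarith [hSnn]
    have hS0 : S = 0 := by linarith
    have : |d| = 0 := by nlinarith
    have hd0 : d = 0 := abs_eq_zero.mp this
    simp [cubicMin, hd0, hh0, ← hSdef, hS0]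
  · rw [cubicMin, ← hSdef, div_eq_div_iff h0.ne' hM.ne']
    rw [abs_of_nonneg hd] at hS2
    nlinarith

theorem cubicMin_perturbation_aux (M : ℝ) (hM : 0 < M) (d d' h h' : ℝ)
    (hd : 0 ≤ d) (hd' : 0 ≤ d') (hh : 0 ≤ h) (hh' : 0 ≤ h')
    (hSS' : 0 < Real.sqrt (h ^ 2 + 2 * M * |d|) + Real.sqrt (h' ^ 2 + 2 * M * |d'|)) :
    |cubicMin M d h - cubicMin M d' h'| ≤
      |h - h'| / M +
        2 * |d - d'| /
          (Real.sqrt (h ^ 2 + 2 * M * |d|) + Real.sqrt (h' ^ 2 + 2 * M * |d'|)) := by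
  set S := Real.sqrt (h ^ 2 + 2 * M * |d|) with hSdef
  set S' := Real.sqrt (h' ^ 2 + 2 * M * |d'|) with hS'def
  have hS2 : S ^ 2 = h ^ 2 + 2 * M * d := by
    rw [hSdef, Real.sq_sqrt (by positivity), abs_of_nonneg hd]
  have hS'2 : S' ^ 2 = h' ^ 2 + 2 * M * d' := by
    rw [hS'def, Real.sq_sqrt (by positivity), abs_of_nonneg hd']
  have hSh : h ≤ S := by
    rw [hSdef]
    calc h = Real.sqrt (h ^ 2) := by rw [Real.sqrt_sq hh]
    _ ≤ _ := Real.sqrt_le_sqrt (by nlinarith [abs_nonneg d, hM.le])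
  have hS'h : h' ≤ S' := by
    rw [hS'def]
    calc h' = Real.sqrt (h' ^ 2) := by rw [Real.sqrt_sq hh']
    _ ≤ _ := Real.sqrt_le_sqrt (by nlinarith [abs_nonneg d', hM.le])
  rw [cubicMin_eq M hM d h hd hh, cubicMin_eq M hM d' h' hd' hh', ← hSdef, ← hS'def]
  set X := (h - S) / M - (h' - S') / M with hXdef
  have hXM : X * M = (h - S) - (h' - S') := by
    rw [hXdef]; field_simp
  have ha1 : h - h' ≤ |h - h'| := le_abs_self _
  have ha2 : -(|h - h'|) ≤ h - h' := neg_abs_le _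
  have hb1 : d - d' ≤ |d - d'| := le_abs_self _
  have hb2 : -(|d - d'|) ≤ d - d' := neg_abs_le _
  have hid : X * M * (S + S') = (h - h') * (S + S' - (h + h')) - 2 * M * (d - d') := by
    rw [hXM]; nlinarith [hS2, hS'2]
  have key : |X * M * (S + S')| ≤ |h - h'| * (S + S') + 2 * M * |d - d'| := by
    rw [abs_le]
    constructor
    · nlinarith [mul_nonneg (by linarith : (0:ℝ) ≤ |h - h'| + (h - h'))
        (by linarith : (0:ℝ) ≤ S + S' - (h + h')),
        mul_nonneg (abs_nonneg (h - h')) (by linarith : (0:ℝ) ≤ h + h'),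
        mul_nonneg hM.le (by linarith : (0:ℝ) ≤ |d - d'| + (d - d'))]
    · nlinarith [mul_nonneg (by linarith : (0:ℝ) ≤ |h - h'| - (h - h'))
        (by linarith : (0:ℝ) ≤ S + S' - (h + h')),
        mul_nonneg (abs_nonneg (h - h')) (by linarith : (0:ℝ) ≤ h + h'),
        mul_nonneg hM.le (by linarith : (0:ℝ) ≤ |d - d'| - (d - d'))]
  have habs : |X * M * (S + S')| = |X| * M * (S + S') := by
    rw [abs_mul, abs_mul, abs_of_pos hM, abs_of_pos hSS']
  rw [habs] at key
  rw [div_add_div _ _ hM.ne' hSS'.ne', le_div_iff₀ (mul_pos hM hSS')]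
  nlinarith [key]

/-- Perturbation bound for the minimizer of the cubic-regularized model:
if `d, d′` have the same sign, `h, h′ ≥ 0`, and `S + S′ > 0` where `S = √(h² + 2M|d|)` and
`S′ = √((h′)² + 2M|d′|)`, then `|φ(d, h) − φ(d′, h′)| ≤ |h − h′|/M + 2|d − d′|/(S + S′)`. -/
theorem cubicMin_perturbation (M : ℝ) (hM : 0 < M) (d d' h h' : ℝ)
    (hdd' : 0 ≤ d * d') (hh : 0 ≤ h) (hh' : 0 ≤ h')
    (hSS' : 0 < Real.sqrt (h ^ 2 + 2 * M * |d|) + Real.sqrt (h' ^ 2 + 2 * M * |d'|)) :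
    |cubicMin M d h - cubicMin M d' h'| ≤
      |h - h'| / M +
        2 * |d - d'| /
          (Real.sqrt (h ^ 2 + 2 * M * |d|) + Real.sqrt (h' ^ 2 + 2 * M * |d'|)) := by
  rcases mul_nonneg_iff.mp hdd' with ⟨h1, h2⟩ | ⟨h1, h2⟩
  · exact cubicMin_perturbation_aux M hM d d' h h' h1 h2 hh hh' hSS'
  · have := cubicMin_perturbation_aux M hM (-d) (-d') h h'
      (by linarith) (by linarith) hh hh' (by simpa [abs_neg] using hSS')
    rw [cubicMin_neg, cubicMin_neg] at this
    simp only [abs_neg] at this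
    calc |cubicMin M d h - cubicMin M d' h'|
        = |-(cubicMin M d h) - -(cubicMin M d' h')| := by rw [← abs_neg]; ring_nf
      _ ≤ _ := by
          convert this using 3
          · rw [← abs_neg]; ring_nf
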